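/- arXiv:2202.00920 — 13 statements merged into one kernel-verified Lean document; each statement's English description precedes it below -/
import Mathlib

section
/- Let S be a numerical semigroup with S ≠ ℕ. Then S ∪ PF(S) is also a numerical semigroup. -/
/-- A numerical semigroup: a subset of ℕ containing 0, closed under addition,
with finite complement. -/
def IsNumSgp (S : Set ℕ) : Prop :=
  0 ∈ S ∧ (∀ a ∈ S, ∀ b ∈ S, a + b ∈ S) ∧ Sᶜ.Finite

/-- Pseudo-Frobenius numbers of `S`. -/
def PF (S : Set ℕ) : Set ℕ :=
  {x | x ∉ S ∧ ∀ s ∈ S, s ≠ 0 → x + s ∈ S}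

/-- `I` is an ideal of `Δ`: nonempty, contained in `Δ`, and `I + Δ ⊆ I`. -/
def IsIdealOf (I Δ : Set ℕ) : Prop :=
  I.Nonempty ∧ I ⊆ Δ ∧ ∀ a ∈ I, ∀ b ∈ Δ, a + b ∈ I

/-- `A` is an i(S)-pertinent set. -/
def IsPertinent (A S : Set ℕ) : Prop :=
  A ⊆ PF S ∧ ∀ a ∈ A, ∀ b ∈ A, a + b ∈ PF S → a + b ∈ A

/-- Iterates 𝒥^k(ℕ): 𝒥^0(ℕ) = {ℕ}, 𝒥^{k+1}(ℕ) = 𝒥(𝒥^k(ℕ)). -/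
def Jiter : ℕ → Set (Set ℕ)
  | 0 => {Set.univ}
  | k + 1 => {S | IsNumSgp S ∧ ∃ Δ ∈ Jiter k, IsIdealOf (S \ {0}) Δ}

/-- An i-chain of length `n` connecting `S` and `T`. -/
def IsIChain (n : ℕ) (c : ℕ → Set ℕ) (S T : Set ℕ) : Prop :=
  c 0 = S ∧ c n = T ∧ (∀ i ≤ n, IsNumSgp (c i)) ∧
    ∀ i < n, c i ⊆ c (i + 1) ∧ IsIdealOf (c i \ {0}) (c (i + 1))

/-- The complexity of a numerical semigroup. -/
noncomputable def complexity (S : Set ℕ) : ℕ := sInf {k | S ∈ Jiter k}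

/-- The multiplicity: the least nonzero element. -/
noncomputable def mult (S : Set ℕ) : ℕ := sInf (S \ {0})

/-- The Frobenius number, as an integer: the largest integer not in `S`. -/
noncomputable def Frob (S : Set ℕ) : ℤ := sSup {z : ℤ | ¬ ∃ n ∈ S, (n : ℤ) = z}

/-- Ordinary numerical semigroup. -/
def IsOrdinary (S : Set ℕ) : Prop := S = {0} ∪ {x : ℕ | mult S ≤ x}

/-- The set γ(S) = {x ∈ ℕ \ S : ⌊F(S)/m(S)⌋·m(S) ≤ x ≤ F(S)}. -/
noncomputable def gamma (S : Set ℕ) : Set ℕ :=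
  {x : ℕ | x ∉ S ∧ ⌊(Frob S : ℚ) / (mult S : ℚ)⌋ * (mult S : ℤ) ≤ (x : ℤ) ∧ (x : ℤ) ≤ Frob S}

/-- The minimal system of generators of `T`: the elements of `T` that are not
generated by the other elements. -/
def msg (T : Set ℕ) : Set ℕ :=
  {x ∈ T | x ∉ (AddSubmonoid.closure (T \ {x}) : Set ℕ)}

/-- If `S` is a numerical semigroup with `S ≠ ℕ`, then `S ∪ PF(S)` is
also a numerical semigroup. -/
theorem stmt0 (S : Set ℕ) (hS : IsNumSgp S) (hne : S ≠ Set.univ) :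
    IsNumSgp (S ∪ PF S) := by
  obtain ⟨h0, hadd, hfin⟩ := hS
  refine ⟨Or.inl h0, ?_, ?_⟩
  · rintro a (ha | ha) b (hb | hb)
    · exact Or.inl (hadd a ha b hb)
    · rcases eq_or_ne a 0 with rfl | h
      · simpa using Or.inr hb
      · exact Or.inl (by simpa [add_comm] using hb.2 a ha h)
    · rcases eq_or_ne b 0 with rfl | h
      · simpa using Or.inr ha
      · exact Or.inl (ha.2 b hb h)
    · by_cases h : a + b ∈ S
      · exact Or.inl h
      · refine Or.inr ⟨h, fun s hs hs0 => ?_⟩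
        have hbs : b + s ∈ S := hb.2 s hs hs0
        have : b + s ≠ 0 := by omega
        have := ha.2 (b + s) hbs this
        simpa [add_assoc] using this
  · exact hfin.subset (by intro x hx; exact fun h => hx (Or.inl h))
end

section
/- Let S and Δ be numerical semigroups. Then Δ is an ideal extension of S (i.e., S \ {0} is an ideal of Δ) if and only if S ⊆ Δ ⊆ S ∪ PF(S). -/
/-- `Δ` is an ideal extension of `S` iff `S ⊆ Δ ⊆ S ∪ PF(S)`. -/
theorem stmt1 (S Δ : Set ℕ) (hS : IsNumSgp S) (hΔ : IsNumSgp Δ) :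
    IsIdealOf (S \ {0}) Δ ↔ S ⊆ Δ ∧ Δ ⊆ S ∪ PF S := by
  constructor
  · rintro ⟨hne, hsub, hadd⟩
    refine ⟨?_, ?_⟩
    · intro x hx
      rcases eq_or_ne x 0 with rfl | hx0
      · exact hΔ.1
      · exact hsub ⟨hx, hx0⟩
    · intro x hxΔ
      by_cases hxS : x ∈ S
      · exact Or.inl hxS
      · refine Or.inr ⟨hxS, fun s hs hs0 => ?_⟩
        have := hadd s ⟨hs, hs0⟩ x hxΔ
        rw [add_comm]
        exact this.1
  · rintro ⟨h1, h2⟩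
    have hSinf : S.Infinite := by
      have := hS.2.2.infinite_compl
      rwa [compl_compl] at this
    refine ⟨?_, fun x hx => h1 hx.1, ?_⟩
    · exact (hSinf.diff (Set.finite_singleton 0)).nonempty
    · rintro a ⟨haS, ha0⟩ b hbΔ
      have ha0' : a ≠ 0 := ha0
      rcases h2 hbΔ with hbS | hbPF
      · exact ⟨hS.2.1 a haS b hbS, by simp; omega⟩
      · have : b + a ∈ S := hbPF.2 a haS ha0'
        rw [add_comm] at this
        exact ⟨this, by simp; omega⟩
end

section
/- Let S be a numerical semigroup with S ≠ ℕ. Then the cardinality of the set {Δ : Δ is a numerical semigroup that is an ideal extension of S} is less than or equal to 2^t(S). -/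
/-- the number of ideal extensions of `S` is at most `2 ^ t(S)`. -/
theorem stmt2 (S : Set ℕ) (hS : IsNumSgp S) (hne : S ≠ Set.univ) :
    {Δ : Set ℕ | IsNumSgp Δ ∧ IsIdealOf (S \ {0}) Δ}.ncard ≤ 2 ^ (PF S).ncard := by
  have hPFfin : (PF S).Finite := hS.2.2.subset (fun x hx => hx.1)
  have hdf : ∀ Δ : Set ℕ, (Δ \ S).Finite := fun Δ =>
    hS.2.2.subset (Set.diff_subset_compl Δ S)
  -- S ⊆ Δ for each element of the set
  have hsub : ∀ Δ ∈ {Δ : Set ℕ | IsNumSgp Δ ∧ IsIdealOf (S \ {0}) Δ}, S ⊆ Δ := by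
    rintro Δ ⟨hΔ, _, hIsub, _⟩ x hx
    rcases eq_or_ne x 0 with rfl | hx0
    · exact hΔ.1
    · exact hIsub ⟨hx, hx0⟩
  calc {Δ : Set ℕ | IsNumSgp Δ ∧ IsIdealOf (S \ {0}) Δ}.ncard
      ≤ (↑(hPFfin.toFinset.powerset) : Set (Finset ℕ)).ncard := by
        apply Set.ncard_le_ncard_of_injOn (fun Δ => (hdf Δ).toFinset)
        · rintro Δ hΔmem
          obtain ⟨hΔ, hne', hIsub, hideal⟩ := hΔmem
          simp only [Finset.coe_powerset, Set.mem_preimage, Set.mem_powerset_iff,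
            Finset.coe_subset, Finset.subset_iff]
          intro x hx
          rw [Set.Finite.mem_toFinset] at hx
          rw [Set.Finite.mem_toFinset]
          refine ⟨hx.2, fun s hs hs0 => ?_⟩
          have := hideal s ⟨hs, hs0⟩ x hx.1
          rw [add_comm] at this
          exact this.1
        · intro Δ₁ h1 Δ₂ h2 heq
          have heq' : Δ₁ \ S = Δ₂ \ S := by
            have := congrArg (fun t : Finset ℕ => (t : Set ℕ)) heq
            simpa [Set.Finite.coe_toFinset] using this
          have h1s := hsub Δ₁ h1
          have h2s := hsub Δ₂ h2
          rw [← Set.diff_union_of_subset h1s, ← Set.diff_union_of_subset h2s, heq']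
    _ = 2 ^ (PF S).ncard := by
        rw [Set.ncard_coe_finset, Finset.card_powerset]; congr 1
        exact (Set.ncard_eq_toFinset_card _ hPFfin).symm
end

section
/- Let S be a numerical semigroup with S ≠ ℕ and let A ⊆ PF(S). Then S ∪ A is a numerical semigroup if and only if for all a, b ∈ A with a + b ∈ PF(S) one has a + b ∈ A. -/
/-- for `A ⊆ PF(S)`, `S ∪ A` is a numerical semigroup iff
whenever `a, b ∈ A` and `a + b ∈ PF(S)`, also `a + b ∈ A`. -/
theorem stmt3 (S A : Set ℕ) (hS : IsNumSgp S) (hne : S ≠ Set.univ)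
    (hA : A ⊆ PF S) :
    IsNumSgp (S ∪ A) ↔ ∀ a ∈ A, ∀ b ∈ A, a + b ∈ PF S → a + b ∈ A := by
  obtain ⟨h0, hadd, hfin⟩ := hS
  constructor
  · rintro ⟨-, hcl, -⟩ a ha b hb hpf
    have := hcl a (Or.inr ha) b (Or.inr hb)
    rcases this with h | h
    · exact absurd h hpf.1
    · exact h
  · intro hcond
    refine ⟨Or.inl h0, ?_, hfin.subset (fun x hx => fun hxS => hx (Or.inl hxS))⟩
    rintro a (ha | ha) b (hb | hb)
    · exact Or.inl (hadd a ha b hb)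
    · -- a ∈ S, b ∈ A
      rcases eq_or_ne a 0 with rfl | hne0
      · simpa using Or.inr hb
      · have := (hA hb).2 a ha hne0
        rw [Nat.add_comm] at this
        exact Or.inl this
    · rcases eq_or_ne b 0 with rfl | hne0
      · simpa using Or.inr ha
      · exact Or.inl ((hA ha).2 b hb hne0)
    · -- a, b ∈ A
      by_cases hab : a + b ∈ S
      · exact Or.inl hab
      · have hpf : a + b ∈ PF S := by
          refine ⟨hab, fun s hs hs0 => ?_⟩
          have hbs : b + s ∈ S := (hA hb).2 s hs hs0
          have hbs0 : b + s ≠ 0 := by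
            intro h; exact hs0 (by omega)
          have := (hA ha).2 (b + s) hbs hbs0
          rwa [← Nat.add_assoc] at this
        exact Or.inr (hcond a ha b hb hpf)
end

section
/- Let S be a numerical semigroup with S ≠ ℕ. Then the set of numerical semigroups that are ideal extensions of S equals {S ∪ A : A is an i(S)-pertinent set}. -/
/-- the set of ideal extensions of `S` is
`{S ∪ A : A is an i(S)-pertinent set}`. -/
theorem stmt4 (S : Set ℕ) (hS : IsNumSgp S) (hne : S ≠ Set.univ) :
    {Δ : Set ℕ | IsNumSgp Δ ∧ IsIdealOf (S \ {0}) Δ}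
      = {T : Set ℕ | ∃ A : Set ℕ, IsPertinent A S ∧ T = S ∪ A} := by
  obtain ⟨h0, hadd, hfin⟩ := hS
  ext Δ
  simp only [Set.mem_setOf_eq]
  constructor
  · rintro ⟨⟨hΔ0, hΔadd, hΔfin⟩, hIne, hIsub, hIid⟩
    refine ⟨Δ \ S, ⟨?_, ?_⟩, ?_⟩
    · rintro x ⟨hxΔ, hxS⟩
      refine ⟨hxS, fun s hs hs0 => ?_⟩
      have h := hIid s ⟨hs, hs0⟩ x hxΔ
      have hs' : s + x ∈ S := h.1
      rwa [add_comm] at hs'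
    · rintro a ⟨haΔ, haS⟩ b ⟨hbΔ, hbS⟩ hab
      exact ⟨hΔadd a haΔ b hbΔ, hab.1⟩
    · apply Set.eq_of_subset_of_subset
      · intro x hx
        by_cases h : x ∈ S
        · exact Or.inl h
        · exact Or.inr ⟨hx, h⟩
      · rintro x (hx | hx)
        · by_cases h : x = 0
          · exact h ▸ hΔ0
          · exact hIsub ⟨hx, h⟩
        · exact hx.1
  · rintro ⟨A, ⟨hApf, hAcl⟩, rfl⟩
    have hSsub : S ⊆ S ∪ A := Set.subset_union_left
    -- a nonzero element of S
    obtain ⟨n, hn⟩ := (Set.Finite.infinite_compl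
      (hfin.union (Set.finite_singleton 0))).nonempty
    rw [Set.mem_compl_iff, Set.mem_union] at hn
    push_neg at hn
    have hnS : n ∈ S := by simpa using hn.1
    have hn0 : n ≠ 0 := by simpa using hn.2
    -- closure of S ∪ A
    have hcl : ∀ a ∈ S ∪ A, ∀ b ∈ S ∪ A, a + b ∈ S ∪ A := by
      rintro a (ha | ha) b (hb | hb)
      · exact Or.inl (hadd a ha b hb)
      · by_cases h : a = 0
        · subst h; simpa using Or.inr hb
        · rw [add_comm]; exact Or.inl ((hApf hb).2 a ha h)
      · by_cases h : b = 0
        · subst h; simpa using Or.inr ha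
        · exact Or.inl ((hApf ha).2 b hb h)
      · by_cases h : a + b ∈ S
        · exact Or.inl h
        · refine Or.inr (hAcl a ha b hb ⟨h, fun s hs hs0 => ?_⟩)
          have hbs : b + s ∈ S := (hApf hb).2 s hs hs0
          have hbs0 : b + s ≠ 0 := by
            intro hc
            exact hs0 (Nat.eq_zero_of_add_eq_zero_left hc)
          have := (hApf ha).2 (b + s) hbs hbs0
          rwa [← add_assoc] at this
    refine ⟨⟨Or.inl h0, hcl, ?_⟩, ⟨n, hnS, hn0⟩, ?_, ?_⟩
    · exact hfin.subset (Set.compl_subset_compl.mpr hSsub)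
    · rintro x ⟨hx, _⟩
      exact Or.inl hx
    · rintro a ⟨haS, ha0⟩ b hb
      refine ⟨?_, ?_⟩
      · rcases hb with hb | hb
        · exact hadd a haS b hb
        · have := (hApf hb).2 a haS (by simpa using ha0)
          rwa [add_comm]
      · simp only [Set.mem_singleton_iff]
        intro hc
        exact (by simpa using ha0 : a ≠ 0) (Nat.eq_zero_of_add_eq_zero_right hc)
end

section
/- For every numerical semigroup S with S ≠ ℕ, each of the following sets is a nonempty i(S)-pertinent set: (a) {F(S)}; (b) {x ∈ PF(S) : 2x ≥ F(S)}; (c) {x ∈ PF(S) : x > F(S) − m(S)}. -/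
/-- for `S ≠ ℕ`, the sets `{F(S)}`, `{x ∈ PF(S) : 2x ≥ F(S)}` and
`{x ∈ PF(S) : x > F(S) - m(S)}` are nonempty i(S)-pertinent sets. -/
theorem stmt6 (S : Set ℕ) (hS : IsNumSgp S) (hne : S ≠ Set.univ) :
    (IsPertinent {x : ℕ | (x : ℤ) = Frob S} S ∧
      {x : ℕ | (x : ℤ) = Frob S}.Nonempty) ∧
    (IsPertinent {x ∈ PF S | Frob S ≤ 2 * (x : ℤ)} S ∧
      {x ∈ PF S | Frob S ≤ 2 * (x : ℤ)}.Nonempty) ∧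
    (IsPertinent {x ∈ PF S | Frob S - (mult S : ℤ) < (x : ℤ)} S ∧
      {x ∈ PF S | Frob S - (mult S : ℤ) < (x : ℤ)}.Nonempty) := by
  obtain ⟨h0, hadd, hfin⟩ := hS
  have hfne : hfin.toFinset.Nonempty := by
    rw [Set.Finite.toFinset_nonempty, Set.nonempty_compl]; exact hne
  set F := hfin.toFinset.max' hfne with hFdef
  have hFnS : F ∉ S := by
    have := hfin.toFinset.max'_mem hfne
    rwa [Set.Finite.mem_toFinset] at this
  have hle : ∀ x, x ∉ S → x ≤ F := fun x hx =>
    hfin.toFinset.le_max' x (by rwa [Set.Finite.mem_toFinset])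
  have hgt : ∀ x, F < x → x ∈ S := fun x hx => by
    by_contra h; exact absurd (hle x h) (not_le.mpr hx)
  have hF1 : 1 ≤ F := by
    rcases Nat.eq_zero_or_pos F with h | h
    · exact absurd h0 (h ▸ hFnS)
    · exact h
  have hFrob : Frob S = (F : ℤ) := by
    apply IsGreatest.csSup_eq
    constructor
    · rintro ⟨n, hn, he⟩
      rw [Nat.cast_inj] at he
      exact hFnS (he ▸ hn)
    · intro z hz
      by_contra hzF
      push_neg at hzF
      have hz0 : 0 ≤ z := le_trans (by exact_mod_cast Nat.zero_le F) hzF.le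
      have : z.toNat ∈ S := by
        apply hgt
        omega
      exact hz ⟨z.toNat, this, by omega⟩
  have hFPF : F ∈ PF S := by
    refine ⟨hFnS, fun s hs hs0 => hgt _ ?_⟩
    omega
  have hm1 : 1 ≤ mult S := by
    have hmem : mult S ∈ S \ {0} := Nat.sInf_mem ⟨F + 1, hgt _ (by omega), by simp⟩
    simp only [Set.mem_diff, Set.mem_singleton_iff] at hmem
    omega
  refine ⟨⟨⟨?_, ?_⟩, ⟨F, by simp [hFrob]⟩⟩,
    ⟨⟨fun x hx => hx.1, fun a ha b hb hab => ⟨hab, ?_⟩⟩, ⟨F, hFPF, by rw [hFrob]; omega⟩⟩,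
    ⟨⟨fun x hx => hx.1, fun a ha b hb hab => ⟨hab, ?_⟩⟩, ⟨F, hFPF, by have h1 := hm1; rw [hFrob]; omega⟩⟩⟩
  · intro x hx
    simp only [Set.mem_setOf_eq, hFrob, Nat.cast_inj] at hx
    exact hx ▸ hFPF
  · intro a ha b hb hab
    simp only [Set.mem_setOf_eq, hFrob, Nat.cast_inj] at ha hb ⊢
    subst ha; subst hb
    exact absurd hab.1 (not_not_intro (hgt _ (by omega)))
  · have := ha.2
    have := hb.2
    push_cast
    omega
  · have := ha.2
    push_cast at this ⊢
    omega
end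

section
/- Let θ be a map assigning to every numerical semigroup S ≠ ℕ a nonempty i(S)-pertinent set θ(S). Given a numerical semigroup S, define S_0 = S and S_{n+1} = S_n ∪ θ(S_n) if S_n ≠ ℕ, and S_{n+1} = ℕ otherwise. Then there exists μ ∈ ℕ such that S_n ⊊ S_{n+1} for all n < μ, S_μ = ℕ, and S_n \ {0} is an ideal of S_{n+1} for all n < μ (so the chain S = S_0 ⊊ S_1 ⊊ ... ⊊ S_μ = ℕ is an i-chain of length μ). -/
lemma key_step (S A : Set ℕ) (hS : IsNumSgp S) (hp : IsPertinent A S)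
    (hA : A.Nonempty) :
    IsNumSgp (S ∪ A) ∧ S ⊂ S ∪ A ∧ IsIdealOf (S \ {0}) (S ∪ A) := by
  obtain ⟨h0, hadd, hfin⟩ := hS
  have hSinf : S.Infinite := by
    have := hfin.infinite_compl
    rwa [compl_compl] at this
  obtain ⟨x, hx, hxne⟩ : ∃ x ∈ S, x ≠ 0 := by
    obtain ⟨x, hx⟩ := (hSinf.diff (Set.finite_singleton 0)).nonempty
    exact ⟨x, hx.1, hx.2⟩
  have hclosed : ∀ a ∈ S ∪ A, ∀ b ∈ S ∪ A, a + b ∈ S ∪ A := by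
    rintro a (ha | ha) b (hb | hb)
    · exact Or.inl (hadd a ha b hb)
    · rcases eq_or_ne a 0 with rfl | hane
      · simpa using Or.inr hb
      · exact Or.inl (by rw [add_comm]; exact (hp.1 hb).2 a ha hane)
    · rcases eq_or_ne b 0 with rfl | hbne
      · simpa using Or.inr ha
      · exact Or.inl ((hp.1 ha).2 b hb hbne)
    · by_cases hab : a + b ∈ S
      · exact Or.inl hab
      · have hpf : a + b ∈ PF S := by
          refine ⟨hab, fun s hs hsne => ?_⟩
          have h1 : b + s ∈ S := (hp.1 hb).2 s hs hsne
          have h2 : b + s ≠ 0 := by omega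
          have := (hp.1 ha).2 (b + s) h1 h2
          rwa [← add_assoc] at this
        exact Or.inr (hp.2 a ha b hb hpf)
  refine ⟨⟨Or.inl h0, hclosed, hfin.subset (by
      intro y hy
      simp only [Set.mem_compl_iff, Set.mem_union, not_or] at hy ⊢
      exact hy.1)⟩, ?_, ?_⟩
  · obtain ⟨a, ha⟩ := hA
    exact ⟨Set.subset_union_left, fun h => (hp.1 ha).1 (h (Or.inr ha))⟩
  · refine ⟨⟨x, hx, hxne⟩, fun y hy => Or.inl hy.1, ?_⟩
    rintro a ⟨haS, hane⟩ b hb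
    simp only [Set.mem_singleton_iff] at hane
    refine ⟨?_, by simp; omega⟩
    rcases hb with hb | hb
    · exact hadd a haS b hb
    · rw [add_comm]; exact (hp.1 hb).2 a haS hane

/-- iterating an i-pertinent map from `S` reaches `ℕ` after a finite
number of steps, along a strictly increasing i-chain. -/
theorem stmt7 (θ : Set ℕ → Set ℕ)
    (hθ : ∀ S : Set ℕ, IsNumSgp S → S ≠ Set.univ →
      IsPertinent (θ S) S ∧ (θ S).Nonempty)
    (S : Set ℕ) (hS : IsNumSgp S) (c : ℕ → Set ℕ) (hc0 : c 0 = S)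
    (hstep : ∀ n : ℕ, (c n ≠ Set.univ → c (n + 1) = c n ∪ θ (c n)) ∧
      (c n = Set.univ → c (n + 1) = Set.univ)) :
    ∃ μ : ℕ, (∀ n < μ, c n ⊂ c (n + 1)) ∧ c μ = Set.univ ∧
      ∀ n < μ, IsIdealOf (c n \ {0}) (c (n + 1)) := by
  have huniv : IsNumSgp (Set.univ : Set ℕ) :=
    ⟨trivial, fun _ _ _ _ => trivial, by simp⟩
  have hns : ∀ n, IsNumSgp (c n) := by
    intro n
    induction n with
    | zero => rwa [hc0]
    | succ n ih =>
      by_cases h : c n = Set.univ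
      · rw [(hstep n).2 h]; exact huniv
      · rw [(hstep n).1 h]
        exact (key_step (c n) (θ (c n)) ih ((hθ (c n) ih h).1) ((hθ (c n) ih h).2)).1
  have hcard : ∀ n, c n = Set.univ ∨ (c n)ᶜ.ncard + n ≤ Sᶜ.ncard := by
    intro n
    induction n with
    | zero => right; rw [hc0]; omega
    | succ n ih =>
      by_cases h : c n = Set.univ
      · left; exact (hstep n).2 h
      · rcases ih with h' | h'
        · exact absurd h' h
        right
        have hsub : c n ⊂ c (n + 1) := by
          rw [(hstep n).1 h]
          exact (key_step (c n) (θ (c n)) (hns n) ((hθ (c n) (hns n) h).1)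
            ((hθ (c n) (hns n) h).2)).2.1
        have hlt : (c (n + 1))ᶜ.ncard < (c n)ᶜ.ncard :=
          Set.ncard_lt_ncard (compl_lt_compl_iff_lt.mpr hsub) (hns n).2.2
        omega
  have hne : {n | c n = Set.univ}.Nonempty := by
    refine ⟨Sᶜ.ncard + 1, ?_⟩
    rcases hcard (Sᶜ.ncard + 1) with h | h
    · exact h
    · omega
  refine ⟨sInf {n | c n = Set.univ}, ?_, Nat.sInf_mem hne, ?_⟩
  all_goals {
    intro n hn
    have hnu : c n ≠ Set.univ := fun h => Nat.notMem_of_lt_sInf hn h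
    have hk := key_step (c n) (θ (c n)) (hns n) ((hθ (c n) (hns n) hnu).1)
      ((hθ (c n) (hns n) hnu).2)
    rw [(hstep n).1 hnu]
    first
    | exact hk.2.1
    | exact hk.2.2
  }
end

section
/- If S is a numerical semigroup, then there exists k ∈ ℕ such that S ∈ 𝒥^k(ℕ). -/
/-!
Induction on the gaps. If `S ≠ ℕ` and `F` is its largest gap, then `T = S ∪ {F}` is again a
numerical semigroup, and `S \ {0}` is an ideal of `T` because adding a positive element to `F`
lands above `F`, hence in `S`. So `S ∈ 𝒥(T)`, and `T` has one gap fewer.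
-/

section AddLargestGap

variable {S : Set ℕ} {F : ℕ}

theorem IsNumSgp.insert_of_forall_lt_mem (hS : IsNumSgp S) (hF : ∀ x, F < x → x ∈ S) :
    IsNumSgp (insert F S) := by
  obtain ⟨h0, hadd, hfin⟩ := hS
  refine ⟨.inr h0, ?_, hfin.subset fun x hx hxS => hx (.inr hxS)⟩
  intro a ha b hb
  rcases Nat.eq_zero_or_pos a with rfl | ha0
  · simpa using hb
  rcases Nat.eq_zero_or_pos b with rfl | hb0
  · simpa using ha
  refine .inr ?_
  rcases ha with rfl | ha <;> rcases hb with rfl | hb <;>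
    first | exact hF _ (by omega) | exact hadd _ ha _ hb

theorem IsNumSgp.isIdealOf_diff_zero_insert (hS : IsNumSgp S) (hF : ∀ x, F < x → x ∈ S) :
    IsIdealOf (S \ {0}) (insert F S) := by
  refine ⟨⟨F + 1, hF _ F.lt_succ_self, F.succ_ne_zero⟩, fun x hx => .inr hx.1, ?_⟩
  rintro a ⟨haS, ha0⟩ b hb
  have ha0 : a ≠ 0 := ha0
  refine ⟨?_, by simp [ha0]⟩
  rcases hb with rfl | hb
  · exact hF _ (by omega)
  · exact hS.2.1 _ haS _ hb

theorem IsNumSgp.mem_Jiter_succ_of_insert (hS : IsNumSgp S) (hF : ∀ x, F < x → x ∈ S) {k : ℕ}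
    (hk : insert F S ∈ Jiter k) : S ∈ Jiter (k + 1) :=
  ⟨hS, _, hk, hS.isIdealOf_diff_zero_insert hF⟩

end AddLargestGap

theorem exists_compl_coe_mem_Jiter (s : Finset ℕ) (hs : IsNumSgp (↑s)ᶜ) :
    ∃ k, (↑s : Set ℕ)ᶜ ∈ Jiter k := by
  induction s using Finset.induction_on_max with
  | empty => exact ⟨0, by simp [Jiter]⟩
  | insert F s hlt ih =>
    have hF : ∀ x, F < x → x ∈ (↑(insert F s) : Set ℕ)ᶜ := by
      intro x hx hxs
      rcases Finset.mem_insert.1 hxs with rfl | hxs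
      · exact hx.false
      · exact (hlt x hxs).asymm hx
    have hT : insert F (↑(insert F s) : Set ℕ)ᶜ = (↑s)ᶜ := by
      ext x
      by_cases hxF : x = F
      · simpa [hxF] using fun h => (hlt F h).false
      · simp [hxF]
    obtain ⟨k, hk⟩ := ih (hT ▸ hs.insert_of_forall_lt_mem hF)
    exact ⟨k + 1, hs.mem_Jiter_succ_of_insert hF (hT ▸ hk)⟩

/-- every numerical semigroup lies in some `𝒥^k(ℕ)`. -/
theorem stmt8 (S : Set ℕ) (hS : IsNumSgp S) :
    ∃ k : ℕ, S ∈ Jiter k := by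
  obtain ⟨s, hs⟩ := hS.2.2.exists_finset_coe
  rw [← compl_compl S, ← hs] at hS ⊢
  exact exists_compl_coe_mem_Jiter s hS
end

section
/- Let S be a numerical semigroup. Then C(S) = 1 if and only if S is an ordinary numerical semigroup and S ≠ ℕ. -/
/-- `C(S) = 1` iff `S` is ordinary and `S ≠ ℕ`. -/
theorem stmt10 (S : Set ℕ) (hS : IsNumSgp S) :
    complexity S = 1 ↔ IsOrdinary S ∧ S ≠ Set.univ := by
  have hJ1 : S ∈ Jiter 1 ↔ IsIdealOf (S \ {0}) Set.univ := by
    constructor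
    · rintro ⟨_, Δ, hΔ, hI⟩
      simp only [Jiter, Set.mem_singleton_iff] at hΔ
      subst hΔ; exact hI
    · intro h
      exact ⟨hS, Set.univ, by simp [Jiter], h⟩
  have key : IsIdealOf (S \ {0}) Set.univ ↔ IsOrdinary S := by
    constructor
    · rintro ⟨hne, _, hid⟩
      have hm : mult S ∈ S \ {0} := Nat.sInf_mem hne
      ext x
      simp only [Set.mem_union, Set.mem_singleton_iff, Set.mem_setOf_eq]
      constructor
      · intro hx
        by_cases h0 : x = 0
        · left; exact h0
        · right; exact Nat.sInf_le ⟨hx, h0⟩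
      · rintro (rfl | hle)
        · exact hS.1
        · have := hid _ hm (x - mult S) (Set.mem_univ _)
          rw [Nat.add_sub_cancel' hle] at this
          exact this.1
    · intro hord
      have hne : (S \ {0}).Nonempty := by
        have hinf : S.Infinite := by
          have := hS.2.2.infinite_compl
          rwa [compl_compl] at this
        exact (hinf.diff (Set.finite_singleton 0)).nonempty
      refine ⟨hne, fun x _ => Set.mem_univ x, ?_⟩
      rintro a ⟨haS, ha0⟩ b -
      constructor
      · have hma : mult S ≤ a := by
          rw [hord] at haS
          rcases haS with h | h
          · exact absurd h ha0
          · exact h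
        rw [hord]
        right
        exact le_trans hma (Nat.le_add_right a b)
      · simp only [Set.mem_singleton_iff] at ha0 ⊢
        omega
  constructor
  · intro hc
    have hne : {k | S ∈ Jiter k}.Nonempty := by
      by_contra h
      rw [Set.not_nonempty_iff_eq_empty] at h
      simp [complexity, h] at hc
    have hmem : S ∈ Jiter 1 := by
      have := Nat.sInf_mem hne
      rwa [show sInf {k | S ∈ Jiter k} = 1 from hc] at this
    have h0 : S ≠ Set.univ := by
      intro h
      have : (0 : ℕ) ∈ {k | S ∈ Jiter k} := by simp [Jiter, h]
      have h2 : complexity S ≤ 0 := Nat.sInf_le this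
      omega
    exact ⟨key.mp (hJ1.mp hmem), h0⟩
  · rintro ⟨hord, hne⟩
    have h1 : (1 : ℕ) ∈ {k | S ∈ Jiter k} := hJ1.mpr (key.mpr hord)
    have h0 : (0 : ℕ) ∉ {k | S ∈ Jiter k} := by
      simp only [Set.mem_setOf_eq, Jiter, Set.mem_singleton_iff]
      exact hne
    refine le_antisymm (Nat.sInf_le h1) ?_
    rw [Nat.one_le_iff_ne_zero]
    intro h
    rcases Nat.sInf_eq_zero.mp h with h | h
    · exact h0 h
    · exact absurd h1 (by simp [h])
end

section
/- Let S be a numerical semigroup. Then C(S) = 2 if and only if S is elementary and not ordinary. -/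
lemma aux_diff_nonempty {S : Set ℕ} (hS : IsNumSgp S) : (S \ {0}).Nonempty := by
  by_contra h
  rw [Set.not_nonempty_iff_eq_empty, Set.diff_eq_empty] at h
  have : Set.Ici 1 ⊆ Sᶜ := by
    intro x hx hxS
    have := h hxS
    simp at this hx; omega
  exact (Set.Ici_infinite 1) (hS.2.2.subset this)

lemma aux_mult_mem {S : Set ℕ} (hS : IsNumSgp S) : mult S ∈ S \ {0} :=
  Nat.sInf_mem (aux_diff_nonempty hS)

lemma aux_mult_le {S : Set ℕ} {a : ℕ} (ha : a ∈ S) (h0 : a ≠ 0) : mult S ≤ a :=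
  Nat.sInf_le ⟨ha, h0⟩

lemma aux_frob_bdd {S : Set ℕ} (hS : IsNumSgp S) :
    BddAbove {z : ℤ | ¬ ∃ n ∈ S, (n : ℤ) = z} := by
  obtain ⟨N, hN⟩ := hS.2.2.bddAbove
  refine ⟨(N : ℤ), fun z hz => ?_⟩
  by_contra hzN
  push_neg at hzN
  have hz0 : 0 ≤ z := by omega
  have : z.toNat ∈ S := by
    by_contra hc
    have := hN hc
    omega
  exact hz ⟨z.toNat, this, by omega⟩

lemma aux_mem_of_frob_lt {S : Set ℕ} (hS : IsNumSgp S) {x : ℕ}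
    (hx : Frob S < (x : ℤ)) : x ∈ S := by
  by_contra hc
  have : (x : ℤ) ∈ {z : ℤ | ¬ ∃ n ∈ S, (n : ℤ) = z} := by
    intro ⟨n, hn, he⟩
    have : n = x := by omega
    exact hc (this ▸ hn)
  exact absurd (le_csSup (aux_frob_bdd hS) this) (not_le.mpr hx)

lemma aux_frob_lt {S : Set ℕ} (hS : IsNumSgp S) {c : ℕ}
    (h : ∀ x : ℕ, c ≤ x → x ∈ S) : Frob S < (c : ℤ) := by
  have hne : (-1 : ℤ) ∈ {z : ℤ | ¬ ∃ n ∈ S, (n : ℤ) = z} := by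
    intro ⟨n, _, he⟩; omega
  have : Frob S ≤ (c : ℤ) - 1 := by
    apply csSup_le ⟨_, hne⟩
    intro z hz
    by_contra hzc
    push_neg at hzc
    have hz0 : 0 ≤ z := by omega
    exact hz ⟨z.toNat, h z.toNat (by omega), by omega⟩
  omega

lemma aux_jiter1 {S : Set ℕ} : S ∈ Jiter 1 ↔
    IsNumSgp S ∧ IsIdealOf (S \ {0}) Set.univ := by
  constructor
  · rintro ⟨h1, Δ, hΔ, h2⟩
    simp only [Jiter, Set.mem_singleton_iff] at hΔ
    exact ⟨h1, hΔ ▸ h2⟩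
  · rintro ⟨h1, h2⟩
    exact ⟨h1, Set.univ, rfl, h2⟩

lemma aux_ord_of_jiter1 {S : Set ℕ} (h : S ∈ Jiter 1) : IsOrdinary S := by
  rw [aux_jiter1] at h
  obtain ⟨hS, _, _, hid⟩ := h
  have hm := aux_mult_mem hS
  ext x
  simp only [Set.mem_union, Set.mem_singleton_iff, Set.mem_setOf_eq]
  constructor
  · intro hx
    rcases eq_or_ne x 0 with h0 | h0
    · exact Or.inl h0
    · exact Or.inr (aux_mult_le hx h0)
  · rintro (h0 | hmx)
    · exact h0 ▸ hS.1
    · have := hid _ hm (x - mult S) (Set.mem_univ _)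
      have he : mult S + (x - mult S) = x := by omega
      exact (he ▸ this).1

lemma aux_ord_jiter1 {S : Set ℕ} (hS : IsNumSgp S) (h : IsOrdinary S) :
    S ∈ Jiter 1 := by
  rw [aux_jiter1]
  refine ⟨hS, aux_diff_nonempty hS, Set.subset_univ _, ?_⟩
  rintro a ⟨haS, ha0⟩ b _
  constructor
  · rw [h] at haS ⊢
    simp only [Set.mem_union, Set.mem_singleton_iff, Set.mem_setOf_eq] at haS ⊢
    rcases haS with h0 | hm
    · exact absurd h0 ha0
    · exact Or.inr (le_add_right hm)
  · simp only [Set.mem_singleton_iff] at ha0 ⊢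
    omega

lemma aux_univ_ordinary : IsOrdinary (Set.univ : Set ℕ) := by
  have hm : mult (Set.univ : Set ℕ) = 1 := by
    have : (Set.univ : Set ℕ) \ {0} = {x | 1 ≤ x} := by
      ext x; simp; omega
    rw [mult, this]
    have : (1 : ℕ) ∈ {x | 1 ≤ x} := by simp
    exact le_antisymm (Nat.sInf_le this) (le_csInf ⟨1, this⟩ fun b hb => hb)
  rw [IsOrdinary, hm]
  ext x; simp; omega

/-- `C(S) = 2` iff `S` is elementary and not ordinary. -/
theorem stmt12 (S : Set ℕ) (hS : IsNumSgp S) :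
    complexity S = 2 ↔ (Frob S < 2 * (mult S : ℤ) ∧ ¬ IsOrdinary S) := by
  have hm := aux_mult_mem hS
  have hm0 : mult S ≠ 0 := hm.2
  constructor
  · intro h
    have hne : {k | S ∈ Jiter k}.Nonempty := by
      by_contra hc
      rw [Set.not_nonempty_iff_eq_empty] at hc
      rw [complexity, hc, Nat.sInf_empty] at h
      omega
    have hmem : S ∈ Jiter 2 := by
      have := Nat.sInf_mem hne
      rwa [complexity, h] at * <;> exact this
    have hnot1 : S ∉ Jiter 1 := fun hc => by
      have := Nat.sInf_le (show (1:ℕ) ∈ {k | S ∈ Jiter k} from hc)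
      rw [← complexity] at this; omega
    obtain ⟨_, Δ, hΔ1, hne', hsub, hid⟩ := hmem
    have hΔord := aux_ord_of_jiter1 hΔ1
    have hΔS : ∀ x : ℕ, 2 * mult S ≤ x → x ∈ S := by
      intro x hx
      have hxm : x - mult S ∈ Δ := by
        rw [hΔord]
        right
        have h1 : mult S ∈ Δ := hsub hm
        have h2 : mult Δ ≤ mult S := by
          rw [hΔord] at h1
          rcases h1 with h0 | hh
          · exact absurd h0 hm0
          · exact hh
        simp only [Set.mem_setOf_eq]; omega
      have := hid _ hm _ hxm
      have he : mult S + (x - mult S) = x := by omega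
      exact (he ▸ this).1
    refine ⟨?_, ?_⟩
    · have := aux_frob_lt hS hΔS
      push_cast at this ⊢
      omega
    · intro hord
      exact hnot1 (aux_ord_jiter1 hS hord)
  · rintro ⟨hfrob, hord⟩
    have hΔ : ({0} ∪ {x : ℕ | mult S ≤ x} : Set ℕ) ∈ Jiter 1 := by
      rw [aux_jiter1]
      refine ⟨⟨Or.inl rfl, ?_, ?_⟩, ⟨mult S, Or.inr (by simp), by simpa using hm0⟩,
        Set.subset_univ _, ?_⟩
      · rintro a (h0 | ha) b (h0' | hb) <;>
          simp only [Set.mem_singleton_iff, Set.mem_union, Set.mem_setOf_eq] at * <;> omega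
      · apply Set.Finite.subset (Set.finite_Iio (mult S))
        intro x hx
        simp only [Set.mem_compl_iff, Set.mem_union, Set.mem_singleton_iff,
          Set.mem_setOf_eq] at hx
        push_neg at hx
        exact hx.2
      · rintro a ⟨(h0 | ha), ha0⟩ b _ <;>
          simp only [Set.mem_singleton_iff, Set.mem_union, Set.mem_setOf_eq,
            Set.mem_diff] at * <;> omega
    have hmem : S ∈ Jiter 2 := by
      refine ⟨hS, _, hΔ, aux_diff_nonempty hS, ?_, ?_⟩
      · rintro a ⟨haS, ha0⟩
        simp only [Set.mem_singleton_iff] at ha0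
        exact Or.inr (aux_mult_le haS ha0)
      · rintro a ⟨haS, ha0⟩ b hb
        simp only [Set.mem_singleton_iff] at ha0
        rcases hb with h0 | hb
        · simp only [Set.mem_singleton_iff] at h0
          subst h0
          exact ⟨haS, by simpa using ha0⟩
        · simp only [Set.mem_setOf_eq] at hb
          have ham : mult S ≤ a := aux_mult_le haS ha0
          refine ⟨aux_mem_of_frob_lt hS (by push_cast; omega), by simp; omega⟩
    have h2 : complexity S ≤ 2 := Nat.sInf_le hmem
    have hne : {k | S ∈ Jiter k}.Nonempty := ⟨2, hmem⟩
    have hmm := Nat.sInf_mem hne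
    rw [← complexity] at *
    interval_cases h : complexity S
    · exfalso
      have : S = Set.univ := by simpa [Jiter] using hmm
      exact hord (this ▸ aux_univ_ordinary)
    · exact absurd (aux_ord_of_jiter1 hmm) hord
    · rfl
end

section
/- Let S be a numerical semigroup with S ≠ ℕ and let k ∈ ℕ. Then C(S) = k if and only if (k−1)·m(S) < F(S) < k·m(S). -/
-- AUX START
def Gaps (S : Set ℕ) : Set ℤ := {z : ℤ | ¬ ∃ n ∈ S, (n : ℤ) = z}

lemma Gaps_nonempty (S : Set ℕ) : (Gaps S).Nonempty := by
  refine ⟨-1, ?_⟩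
  rintro ⟨n, _, hn⟩
  omega

lemma Gaps_bdd {S : Set ℕ} (h : Sᶜ.Finite) : BddAbove (Gaps S) := by
  obtain ⟨N, hN⟩ := h.bddAbove
  refine ⟨(N : ℤ), fun z hz => ?_⟩
  by_contra hc
  push_neg at hc
  have hz0 : 0 ≤ z := by omega
  have : z.toNat ∈ Sᶜ := by
    intro hmem
    exact hz ⟨z.toNat, hmem, by omega⟩
  have := hN this
  omega

lemma frob_eq (S : Set ℕ) : Frob S = sSup (Gaps S) := rfl

lemma frob_mem {S : Set ℕ} (h : Sᶜ.Finite) : Frob S ∈ Gaps S :=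
  Int.csSup_mem (Gaps_nonempty S) (Gaps_bdd h)

lemma le_frob {S : Set ℕ} (h : Sᶜ.Finite) {x : ℕ} (hx : x ∉ S) : (x : ℤ) ≤ Frob S := by
  refine le_csSup (Gaps_bdd h) ?_
  rintro ⟨n, hn, he⟩
  have hnx : n = x := by omega
  subst hnx
  exact hx hn

lemma mem_of_frob_lt {S : Set ℕ} (h : Sᶜ.Finite) {x : ℕ} (hx : Frob S < (x : ℤ)) : x ∈ S := by
  by_contra hc
  have := le_frob h hc
  omega

lemma exists_nonzero {S : Set ℕ} (h : Sᶜ.Finite) : (S \ {0}).Nonempty := by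
  obtain ⟨N, hN⟩ := h.bddAbove
  refine ⟨N + 1, ?_, by simp⟩
  by_contra hc
  have := hN (show N + 1 ∈ Sᶜ from hc)
  omega

lemma mult_spec {S : Set ℕ} (h : Sᶜ.Finite) : mult S ∈ S ∧ mult S ≠ 0 := by
  have h1 := Nat.sInf_mem (exists_nonzero h)
  refine ⟨h1.1, fun he => h1.2 (Set.mem_singleton_iff.mpr he)⟩

lemma mult_le {S : Set ℕ} {x : ℕ} (hx : x ∈ S) (hx0 : x ≠ 0) : mult S ≤ x :=
  Nat.sInf_le ⟨hx, by simpa using hx0⟩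

lemma multiples_mem {S : Set ℕ} (hS : IsNumSgp S) : ∀ i : ℕ, i * mult S ∈ S := by
  intro i
  induction i with
  | zero => simpa using hS.1
  | succ n ih =>
    have := hS.2.1 _ ih _ (mult_spec hS.2.2).1
    simpa [Nat.succ_mul] using this

lemma numsgp_univ : IsNumSgp (Set.univ : Set ℕ) := by
  refine ⟨trivial, fun _ _ _ _ => trivial, by simp⟩

lemma jiter_numsgp : ∀ {k : ℕ} {S : Set ℕ}, S ∈ Jiter k → IsNumSgp S := by
  intro k S h
  cases k with
  | zero =>
    have : S = Set.univ := by simpa [Jiter] using h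
    exact this ▸ numsgp_univ
  | succ n => exact h.1

/-- Lower bound: membership in Jiter k forces Frob < k * mult. -/
lemma jiter_frob_lt : ∀ (k : ℕ) (S : Set ℕ), S ∈ Jiter k →
    Frob S < (k : ℤ) * (mult S : ℤ) := by
  intro k
  induction k with
  | zero =>
    intro S h
    have hu : S = Set.univ := by simpa [Jiter] using h
    subst hu
    have : Frob (Set.univ : Set ℕ) ≤ -1 := by
      refine csSup_le (Gaps_nonempty _) ?_
      intro z hz
      by_contra hc
      push_neg at hc
      exact hz ⟨z.toNat, trivial, by omega⟩
    simpa using this.trans_lt (by norm_num)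
  | succ n ih =>
    rintro S ⟨hS, Δ, hΔ, hne, hsub, hideal⟩
    have hΔsgp := jiter_numsgp hΔ
    have hFΔ := ih Δ hΔ
    have hm := mult_spec hS.2.2
    -- mult Δ ≤ mult S
    have hmle : mult Δ ≤ mult S :=
      mult_le (hsub ⟨hm.1, by simpa using hm.2⟩) hm.2
    -- Frob S ≤ Frob Δ + mult S
    have hFneg : (-1 : ℤ) ≤ Frob Δ :=
      le_csSup (Gaps_bdd hΔsgp.2.2) (by rintro ⟨n, _, hn⟩; omega)
    have hFS : Frob S ≤ Frob Δ + (mult S : ℤ) := by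
      rcases lt_or_ge (Frob S) 0 with h0 | h0
      · have : (0:ℤ) ≤ mult S := by positivity
        omega
      · set x := (Frob S).toNat with hx
        have hxF : (x : ℤ) = Frob S := by omega
        have hxS : x ∉ S := by
          intro hmem
          exact frob_mem hS.2.2 ⟨x, hmem, hxF⟩
        rcases lt_or_ge x (mult S) with hxm | hxm
        · omega
        · -- x - mult S ∉ Δ
          have hnd : x - mult S ∉ Δ := by
            intro hd
            have := hideal (mult S) ⟨hm.1, by simpa using hm.2⟩ _ hd
            rw [Nat.add_sub_cancel' hxm] at this
            exact hxS this.1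
          have := le_frob hΔsgp.2.2 hnd
          have hc : ((x - mult S : ℕ) : ℤ) = (x:ℤ) - mult S := by omega
          omega
    have hmul : (n : ℤ) * (mult Δ : ℤ) ≤ (n : ℤ) * (mult S : ℤ) := by
      have : (mult Δ : ℤ) ≤ (mult S : ℤ) := by exact_mod_cast hmle
      exact mul_le_mul_of_nonneg_left this (by positivity)
    push_cast
    push_cast at hFΔ hmul
    nlinarith [hFS]

/-- Upper bound: Frob < k * mult implies membership in Jiter k. -/
lemma jiter_of_frob_lt : ∀ (k : ℕ) (S : Set ℕ), IsNumSgp S →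
    Frob S < (k : ℤ) * (mult S : ℤ) → S ∈ Jiter k := by
  intro k
  induction k with
  | zero =>
    intro S hS hF
    have : S = Set.univ := by
      ext x
      simp only [Set.mem_univ, iff_true]
      by_contra hc
      have := le_frob hS.2.2 hc
      simp at hF
      omega
    simp [Jiter, this]
  | succ n ih =>
    intro S hS hF
    set F := Frob S with hFdef
    set m := mult S with hmdef
    have hm := mult_spec hS.2.2
    have hm1 : 1 ≤ m := Nat.one_le_iff_ne_zero.2 hm.2
    set T : Set ℕ := S ∪ {x : ℕ | F - (m : ℤ) < (x : ℤ)} with hTdef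
    have hST : S ⊆ T := Set.subset_union_left
    have hTsgp : IsNumSgp T := by
      refine ⟨hST hS.1, ?_, ?_⟩
      · rintro a ha b hb
        rcases ha with ha | ha
        · rcases hb with hb | hb
          · exact Or.inl (hS.2.1 a ha b hb)
          · refine Or.inr ?_
            simp only [Set.mem_setOf_eq] at hb ⊢
            push_cast
            omega
        · refine Or.inr ?_
          simp only [Set.mem_setOf_eq] at ha ⊢
          push_cast
          omega
      · exact hS.2.2.subset (fun x hx => by
          simp only [Set.mem_compl_iff, hTdef, Set.mem_union] at hx ⊢
          exact fun h => hx (Or.inl h))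
    -- every gap of T is ≤ max (F - m) (-1)
    have hFT : Frob T ≤ max (F - (m : ℤ)) (-1) := by
      refine csSup_le (Gaps_nonempty T) ?_
      intro z hz
      rcases lt_or_ge z 0 with h0 | h0
      · exact le_max_of_le_right (by omega)
      · refine le_max_of_le_left ?_
        by_contra hc
        push_neg at hc
        exact hz ⟨z.toNat, Or.inr (by simp only [Set.mem_setOf_eq]; omega), by omega⟩
    have hmT := mult_spec hTsgp.2.2
    have hmTle : mult T ≤ m := mult_le (hST hm.1) hm.2
    -- ideal property
    have hideal : IsIdealOf (S \ {0}) T := by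
      refine ⟨⟨m, hm.1, by simpa using hm.2⟩, fun x hx => hST hx.1, ?_⟩
      rintro a ⟨haS, ha0⟩ b hb
      have ha0' : a ≠ 0 := by simpa using ha0
      refine ⟨?_, by simp; omega⟩
      rcases hb with hb | hb
      · exact hS.2.1 a haS b hb
      · simp only [Set.mem_setOf_eq] at hb
        have ham : m ≤ a := mult_le haS ha0'
        refine mem_of_frob_lt hS.2.2 ?_
        push_cast
        omega
    -- Frob T < n * mult T
    have hFTn : Frob T < (n : ℤ) * (mult T : ℤ) := by
      rcases le_or_gt (m : ℤ) F with hFm | hFm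
      · have hn1 : 1 ≤ n := by
          by_contra hc
          push_neg at hc
          interval_cases n
          simp at hF
          omega
        have hFT' : Frob T ≤ F - (m:ℤ) := by
          have : max (F - (m : ℤ)) (-1) = F - (m:ℤ) := max_eq_left (by omega)
          omega
        rcases Classical.em (mult T ∈ S) with hin | hnin
        · have : m ≤ mult T := mult_le hin hmT.2
          have hEq : mult T = m := le_antisymm hmTle this
          rw [hEq]
          push_cast at hF ⊢
          nlinarith
        · have : mult T ∈ T := hmT.1
          rcases this with h | h
          · exact absurd h hnin
          · simp only [Set.mem_setOf_eq] at h
            have h1 : ((1:ℕ) : ℤ) * (mult T : ℤ) ≤ (n : ℤ) * (mult T : ℤ) := by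
              refine mul_le_mul_of_nonneg_right ?_ (by positivity)
              exact_mod_cast hn1
            push_cast at h1
            omega
      · have : Frob T ≤ -1 := by
          have : max (F - (m : ℤ)) (-1) = -1 := max_eq_right (by omega)
          omega
        have : (0:ℤ) ≤ (n : ℤ) * (mult T : ℤ) := by positivity
        omega
    exact ⟨hS, T, ih T hTsgp hFTn, hideal⟩
-- AUX END

/-- for `S ≠ ℕ`, `C(S) = k` iff `(k-1)·m(S) < F(S) < k·m(S)`. -/
theorem stmt13 (S : Set ℕ) (hS : IsNumSgp S) (hne : S ≠ Set.univ) (k : ℕ) :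
    complexity S = k ↔
      ((k : ℤ) - 1) * (mult S : ℤ) < Frob S ∧ Frob S < (k : ℤ) * (mult S : ℤ) := by
  have hfin := hS.2.2
  have hm := mult_spec hfin
  have hm1 : 1 ≤ mult S := Nat.one_le_iff_ne_zero.2 hm.2
  -- F ≥ 0
  have hF0 : 0 ≤ Frob S := by
    obtain ⟨x, hx⟩ : ∃ x, x ∉ S := by
      by_contra hc
      push_neg at hc
      exact hne (Set.eq_univ_of_forall hc)
    have := le_frob hfin hx
    omega
  set c := complexity S with hcdef
  have hKne : S ∈ Jiter ((Frob S).toNat + 1) := by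
    refine jiter_of_frob_lt _ _ hS ?_
    have hmc : (1:ℤ) ≤ (mult S : ℤ) := by exact_mod_cast hm1
    have ht : ((Frob S).toNat : ℤ) = Frob S := Int.toNat_of_nonneg hF0
    push_cast
    rw [ht]
    nlinarith
  have hKne' : {k | S ∈ Jiter k}.Nonempty := ⟨(Frob S).toNat + 1, show S ∈ Jiter _ from hKne⟩
  have hcmem : S ∈ Jiter c := Nat.sInf_mem hKne'

  have hcub : Frob S < (c : ℤ) * (mult S : ℤ) := jiter_frob_lt c S hcmem
  have hc1 : 1 ≤ c := by
    by_contra hc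
    push_neg at hc
    interval_cases c
    have : S = Set.univ := by simpa [Jiter] using hcmem
    exact hne this
  have hsinf : sInf {k | S ∈ Jiter k} = c := rfl
  have hclb : ((c : ℤ) - 1) * (mult S : ℤ) < Frob S := by
    by_contra hcon
    push_neg at hcon
    have hcc : ((c - 1 : ℕ) : ℤ) = (c : ℤ) - 1 := by omega
    rcases lt_or_eq_of_le hcon with hlt | heq
    · -- F < (c-1)*m ⇒ S ∈ Jiter (c-1), contradicting minimality
      have hmem : S ∈ Jiter (c - 1) := by
        refine jiter_of_frob_lt _ _ hS ?_
        rw [hcc]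
        exact hlt
      have := Nat.sInf_le (show c - 1 ∈ {k | S ∈ Jiter k} from hmem)
      omega
    · -- F = (c-1)*m is a multiple of m, hence in S, contradiction
      have hxS : (c - 1) * mult S ∈ S := multiples_mem hS (c - 1)
      have hcast : (((c - 1) * mult S : ℕ) : ℤ) = Frob S := by
        rw [Nat.cast_mul, hcc]
        exact heq.symm
      exact frob_mem hfin ⟨_, hxS, hcast⟩
  constructor
  · rintro rfl
    exact ⟨hclb, hcub⟩
  · rintro ⟨h1, h2⟩
    have hmpos : (0:ℤ) < (mult S : ℤ) := by exact_mod_cast hm1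
    have hkc : (k : ℤ) = (c : ℤ) := by nlinarith
    omega
end

section
/- If S is a numerical semigroup, then C(S) = ⌊F(S)/m(S)⌋ + 1, where the floor is taken in ℤ (note F(ℕ) = −1 and m(ℕ) = 1, giving C(ℕ) = 0). -/
namespace Stmt14Aux

def G (S : Set ℕ) : Set ℤ := {z : ℤ | ¬ ∃ n ∈ S, (n : ℤ) = z}

lemma frob_eq (S : Set ℕ) : Frob S = sSup (G S) := rfl

lemma neg_mem_G (S : Set ℕ) {z : ℤ} (hz : z < 0) : z ∈ G S := by
  rintro ⟨n, _, hn⟩; omega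

lemma nat_mem_G_iff (S : Set ℕ) (x : ℕ) : (x : ℤ) ∈ G S ↔ x ∉ S := by
  constructor
  · intro h hx; exact h ⟨x, hx, rfl⟩
  · rintro h ⟨n, hn, hnx⟩
    have : n = x := by exact_mod_cast hnx
    exact h (this ▸ hn)

lemma bddAbove_G {S : Set ℕ} (hfin : Sᶜ.Finite) : BddAbove (G S) := by
  obtain ⟨N, hN⟩ := hfin.bddAbove
  refine ⟨(N : ℤ), ?_⟩
  rintro z hz
  rcases lt_or_ge z 0 with h | h
  · omega
  · have hx : z.toNat ∉ S := by
      rw [← nat_mem_G_iff S z.toNat]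
      have : ((z.toNat : ℤ)) = z := Int.toNat_of_nonneg h
      rwa [this]
    have := hN hx
    omega

lemma le_frob {S : Set ℕ} (hfin : Sᶜ.Finite) {x : ℕ} (hx : x ∉ S) : (x : ℤ) ≤ Frob S :=
  le_csSup (bddAbove_G hfin) ((nat_mem_G_iff S x).2 hx)

lemma mem_of_frob_lt {S : Set ℕ} (hfin : Sᶜ.Finite) {x : ℕ} (hx : Frob S < x) : x ∈ S := by
  by_contra h
  exact absurd (le_frob hfin h) (not_le.2 hx)

lemma neg_one_le_frob {S : Set ℕ} (hfin : Sᶜ.Finite) : -1 ≤ Frob S :=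
  le_csSup (bddAbove_G hfin) (neg_mem_G S (by norm_num))

lemma frob_univ : Frob (Set.univ : Set ℕ) = -1 := by
  refine le_antisymm (csSup_le ⟨-1, neg_mem_G _ (by norm_num)⟩ ?_) ?_
  · intro z hz
    by_contra h
    push_neg at h
    exact hz ⟨z.toNat, Set.mem_univ _, Int.toNat_of_nonneg (by omega)⟩
  · exact neg_one_le_frob (by simp)

lemma numsgp_univ : IsNumSgp (Set.univ : Set ℕ) :=
  ⟨Set.mem_univ _, fun _ _ _ _ => Set.mem_univ _, by simp⟩

lemma sdiff_nonempty {S : Set ℕ} (hS : IsNumSgp S) : (S \ {0}).Nonempty := by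
  have h1 : S.Infinite := by
    have := hS.2.2.infinite_compl
    rwa [compl_compl] at this
  exact (h1.diff (Set.finite_singleton 0)).nonempty

lemma mult_mem {S : Set ℕ} (hS : IsNumSgp S) : mult S ∈ S \ {0} :=
  Nat.sInf_mem (sdiff_nonempty hS)

lemma mult_pos {S : Set ℕ} (hS : IsNumSgp S) : 1 ≤ mult S := by
  have := (mult_mem hS).2
  simp only [Set.mem_singleton_iff] at this
  omega

lemma mult_le {S : Set ℕ} {s : ℕ} (hs : s ∈ S) (h0 : s ≠ 0) : mult S ≤ s :=
  Nat.sInf_le ⟨hs, h0⟩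

/-- The chain. -/
def cset (S : Set ℕ) (i : ℕ) : Set ℕ :=
  S ∪ {x : ℕ | Frob S + 1 - (i : ℤ) * (mult S : ℤ) ≤ (x : ℤ)}

lemma cset_numsgp {S : Set ℕ} (hS : IsNumSgp S) (i : ℕ) : IsNumSgp (cset S i) := by
  refine ⟨Or.inl hS.1, ?_, ?_⟩
  · rintro a (ha | ha) b (hb | hb)
    · exact Or.inl (hS.2.1 a ha b hb)
    · refine Or.inr ?_; simp only [Set.mem_setOf_eq] at hb ⊢; push_cast; omega
    · refine Or.inr ?_; simp only [Set.mem_setOf_eq] at ha ⊢; push_cast; omega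
    · refine Or.inr ?_; simp only [Set.mem_setOf_eq] at ha hb ⊢; push_cast; omega
  · refine hS.2.2.subset ?_
    intro x hx
    simp only [cset, Set.mem_compl_iff, Set.mem_union, not_or] at hx ⊢
    exact hx.1

lemma cset_subset_succ (S : Set ℕ) (i : ℕ) : cset S i ⊆ cset S (i + 1) := by
  rintro x (hx | hx)
  · exact Or.inl hx
  · refine Or.inr ?_
    simp only [Set.mem_setOf_eq] at hx ⊢
    have hm : (0 : ℤ) ≤ (mult S : ℤ) := by positivity
    push_cast
    nlinarith

lemma cset_zero {S : Set ℕ} (hS : IsNumSgp S) : cset S 0 = S := by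
  apply Set.Subset.antisymm
  · rintro x (hx | hx)
    · exact hx
    · simp only [Set.mem_setOf_eq, Nat.cast_zero, zero_mul, sub_zero] at hx
      exact mem_of_frob_lt hS.2.2 (by omega)
  · exact Set.subset_union_left

lemma cset_top {S : Set ℕ} {k : ℕ} (hk : Frob S + 1 ≤ (k : ℤ) * (mult S : ℤ)) :
    cset S k = Set.univ := by
  refine Set.eq_univ_of_forall fun x => Or.inr ?_
  simp only [Set.mem_setOf_eq]
  omega

lemma cset_ideal {S : Set ℕ} (hS : IsNumSgp S) (i : ℕ) :
    IsIdealOf (cset S i \ {0}) (cset S (i + 1)) := by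
  have hmm := mult_mem hS
  refine ⟨⟨mult S, Or.inl hmm.1, hmm.2⟩, (Set.diff_subset).trans (cset_subset_succ S i), ?_⟩
  rintro a ⟨ha, ha0⟩ b hb
  simp only [Set.mem_singleton_iff] at ha0
  refine ⟨?_, by simp only [Set.mem_singleton_iff]; omega⟩
  rcases ha with ha | ha
  · rcases hb with hb | hb
    · exact Or.inl (hS.2.1 a ha b hb)
    · refine Or.inr ?_
      simp only [Set.mem_setOf_eq] at hb ⊢
      have ham : (mult S : ℤ) ≤ (a : ℤ) := by exact_mod_cast mult_le ha ha0
      push_cast at hb ⊢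
      nlinarith
  · refine Or.inr ?_
    simp only [Set.mem_setOf_eq] at ha ⊢
    have : (0:ℤ) ≤ (b:ℤ) := by positivity
    push_cast
    omega

lemma cset_mem_jiter {S : Set ℕ} (hS : IsNumSgp S) {k : ℕ}
    (hk : Frob S + 1 ≤ (k : ℤ) * (mult S : ℤ)) :
    ∀ i ≤ k, cset S (k - i) ∈ Jiter i := by
  intro i
  induction i with
  | zero =>
    intro _
    simp only [Nat.sub_zero, Jiter, Set.mem_singleton_iff]
    exact cset_top hk
  | succ n ih =>
    intro hn
    refine ⟨cset_numsgp hS _, cset S (k - n), ih (by omega), ?_⟩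
    have h1 : k - (n + 1) + 1 = k - n := by omega
    have := cset_ideal hS (k - (n + 1))
    rwa [h1] at this

lemma jiter_numsgp : ∀ k (S : Set ℕ), S ∈ Jiter k → IsNumSgp S := by
  rintro (_ | k) S h
  · simp only [Jiter, Set.mem_singleton_iff] at h
    rw [h]; exact numsgp_univ
  · exact h.1

lemma jiter_frob_lt : ∀ k (S : Set ℕ), S ∈ Jiter k → Frob S < (k : ℤ) * (mult S : ℤ) := by
  intro k
  induction k with
  | zero =>
    intro S h
    simp only [Jiter, Set.mem_singleton_iff] at h
    rw [h, frob_univ]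
    simp
  | succ n ih =>
    rintro S ⟨hSn, Δ, hΔk, hne, hsub, hid⟩
    have hΔn : IsNumSgp Δ := jiter_numsgp n Δ hΔk
    have hIH := ih Δ hΔk
    have hmS := mult_mem hSn
    have hmS0 : mult S ≠ 0 := hmS.2
    have hm1 : 1 ≤ mult S := mult_pos hSn
    have hmΔ : (mult Δ : ℤ) ≤ (mult S : ℤ) := by
      have : mult S ∈ Δ := hsub ⟨hmS.1, hmS.2⟩
      exact_mod_cast mult_le this hmS0
    have hFΔ : -1 ≤ Frob Δ := neg_one_le_frob hΔn.2.2
    -- F(S) ≤ F(Δ) + m(S)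
    have hkey : Frob S ≤ Frob Δ + (mult S : ℤ) := by
      refine csSup_le ⟨-1, neg_mem_G _ (by norm_num)⟩ ?_
      intro z hz
      rcases lt_or_ge z 0 with h | h
      · omega
      · set x := z.toNat with hx
        have hzx : (x : ℤ) = z := Int.toNat_of_nonneg h
        have hxS : x ∉ S := (nat_mem_G_iff S x).1 (by rwa [hzx])
        by_contra hc
        push_neg at hc
        have hxm : mult S ≤ x := by omega
        set y := x - mult S with hy
        have hyz : (y : ℤ) = (x : ℤ) - (mult S : ℤ) := by push_cast; omega
        have hyΔ : y ∈ Δ := mem_of_frob_lt hΔn.2.2 (by omega)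
        have := hid (mult S) ⟨hmS.1, hmS.2⟩ y hyΔ
        have hxx : mult S + y = x := by omega
        rw [hxx] at this
        exact hxS this.1
    have : (n : ℤ) * (mult Δ : ℤ) ≤ (n : ℤ) * (mult S : ℤ) := by
      have : (0:ℤ) ≤ (n:ℤ) := by positivity
      nlinarith
    push_cast
    nlinarith

end Stmt14Aux

/-- `C(S) = ⌊F(S)/m(S)⌋ + 1`. -/
theorem stmt14 (S : Set ℕ) (hS : IsNumSgp S) :
    (complexity S : ℤ) = ⌊(Frob S : ℚ) / (mult S : ℚ)⌋ + 1 := by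
  have hfin := hS.2.2
  have hm1 : 1 ≤ mult S := Stmt14Aux.mult_pos hS
  have hmq : (0 : ℚ) < (mult S : ℚ) := by exact_mod_cast hm1
  have hF : -1 ≤ Frob S := Stmt14Aux.neg_one_le_frob hfin
  set q : ℤ := ⌊(Frob S : ℚ) / (mult S : ℚ)⌋ with hqdef
  have hq : -1 ≤ q := by
    rw [hqdef]
    refine Int.le_floor.2 ?_
    rw [le_div_iff₀ hmq]
    have : (-(mult S : ℚ)) ≤ (Frob S : ℚ) := by
      have : (-(mult S : ℤ)) ≤ Frob S := by omega
      exact_mod_cast this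
    push_cast
    linarith
  set k : ℕ := (q + 1).toNat with hkdef
  have hkz : (k : ℤ) = q + 1 := Int.toNat_of_nonneg (by omega)
  have hkm : Frob S + 1 ≤ (k : ℤ) * (mult S : ℤ) := by
    have h1 : ((Frob S : ℚ)) / (mult S : ℚ) < q + 1 := Int.lt_floor_add_one _
    rw [div_lt_iff₀ hmq] at h1
    have h2 : (Frob S : ℤ) < (q + 1) * (mult S : ℤ) := by exact_mod_cast h1
    rw [hkz]; omega
  have hmem : S ∈ Jiter k := by
    have := Stmt14Aux.cset_mem_jiter hS hkm k le_rfl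
    simpa [Stmt14Aux.cset_zero hS] using this
  have hub : complexity S ≤ k := Nat.sInf_le hmem
  have hlb : k ≤ complexity S := by
    refine le_csInf ⟨k, hmem⟩ ?_
    intro j hj
    have hflt := Stmt14Aux.jiter_frob_lt j S hj
    have : q < (j : ℤ) := by
      rw [hqdef]
      refine Int.floor_lt.2 ?_
      rw [div_lt_iff₀ hmq]
      exact_mod_cast hflt
    omega
  have heq : complexity S = k := le_antisymm hub hlb
  rw [heq, hkz]
end

section
/- Let c ∈ ℕ and m ∈ ℕ with m ≥ 2. Then the cardinality of the set {S : S is a numerical semigroup, m(S) = m and C(S) = c} is less than or equal to the cardinality of the set {S : S is a numerical semigroup, m(S) = m and C(S) = c + 1}. -/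
set_option linter.unusedSectionVars false

namespace Stmt19Aux

/-- The set of thresholds beyond which everything is in `S`. -/
def fbset (S : Set ℕ) : Set ℕ := {N | ∀ n, N ≤ n → n ∈ S}

/-- The conductor of `S` (Frobenius number plus one). -/
noncomputable def fb (S : Set ℕ) : ℕ := sInf (fbset S)

lemma fbset_nonempty {S : Set ℕ} (h : Sᶜ.Finite) : (fbset S).Nonempty := by
  obtain ⟨K, hK⟩ := h.bddAbove
  refine ⟨K + 1, fun n hn => ?_⟩
  by_contra hns
  exact absurd (hK hns) (by omega)

lemma fb_mem {S : Set ℕ} (h : Sᶜ.Finite) : ∀ n, fb S ≤ n → n ∈ S :=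
  Nat.sInf_mem (fbset_nonempty h)

lemma diff_nonempty {S : Set ℕ} (hS : IsNumSgp S) : (S \ {0}).Nonempty :=
  ((Set.infinite_of_finite_compl hS.2.2).diff (Set.finite_singleton 0)).nonempty

lemma mult_mem {S : Set ℕ} (hS : IsNumSgp S) : mult S ∈ S \ {0} :=
  Nat.sInf_mem (diff_nonempty hS)

lemma mult_le {S : Set ℕ} {a : ℕ} (ha : a ∈ S) (h0 : a ≠ 0) : mult S ≤ a :=
  Nat.sInf_le ⟨ha, h0⟩

lemma univ_isNumSgp : IsNumSgp (Set.univ : Set ℕ) :=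
  ⟨trivial, fun _ _ _ _ => trivial, by simp⟩

lemma Jiter_isNumSgp {k : ℕ} {T : Set ℕ} (h : T ∈ Jiter k) : IsNumSgp T := by
  cases k with
  | zero =>
    have : T = Set.univ := by simpa [Jiter] using h
    rw [this]; exact univ_isNumSgp
  | succ k => exact h.1

lemma univ_mem_Jiter : ∀ k, (Set.univ : Set ℕ) ∈ Jiter k := by
  intro k
  induction k with
  | zero => simp [Jiter]
  | succ k ih =>
    refine ⟨univ_isNumSgp, Set.univ, ih, ⟨1, trivial, by simp⟩, fun _ _ => trivial,
      fun a ha b _ => ⟨trivial, ?_⟩⟩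
    have : a ≠ 0 := ha.2
    simp only [Set.mem_singleton_iff]
    omega

/-- Lower bound: membership in `Jiter k` forces the conductor to be at most `k * mult`. -/
lemma fb_le_of_mem_Jiter : ∀ k, ∀ S : Set ℕ, S ∈ Jiter k → fb S ≤ k * mult S := by
  intro k
  induction k with
  | zero =>
    intro S h
    have hT : S = Set.univ := by simpa [Jiter] using h
    subst hT
    have : fb (Set.univ : Set ℕ) ≤ 0 := Nat.sInf_le (fun n _ => trivial)
    omega
  | succ k ih =>
    intro S h
    obtain ⟨hS, Δ, hΔ, hne, hsub, hideal⟩ := h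
    have hΔsgp := Jiter_isNumSgp hΔ
    have hmS := mult_mem hS
    have hmS0 : mult S ≠ 0 := hmS.2
    have hmem : mult S ∈ Δ := hsub hmS
    have h1 : mult Δ ≤ mult S := mult_le hmem hmS0
    have h2 : fb S ≤ fb Δ + mult S := by
      apply Nat.sInf_le
      intro n hn
      have hd : n - mult S ∈ Δ := fb_mem hΔsgp.2.2 _ (by omega)
      have h3 := hideal (mult S) hmS (n - mult S) hd
      have hn' : mult S + (n - mult S) = n := by omega
      rw [hn'] at h3
      exact h3.1
    have h4 := ih Δ hΔ
    have h5 : k * mult Δ ≤ k * mult S := Nat.mul_le_mul_left k h1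
    have h6 : (k + 1) * mult S = k * mult S + mult S := by ring
    omega

/-- Upper bound: a small conductor forces membership in `Jiter k`. -/
lemma mem_Jiter_of_fb_le : ∀ k, ∀ S : Set ℕ, IsNumSgp S → fb S ≤ k * mult S → S ∈ Jiter k := by
  intro k
  induction k with
  | zero =>
    intro S hS hfb
    have hfb0 : fb S = 0 := by omega
    have hmem : ∀ n, n ∈ S := fun n => fb_mem hS.2.2 n (by omega)
    have : S = Set.univ := Set.eq_univ_of_forall hmem
    simp [Jiter, this]
  | succ k ih =>
    intro S hS hfb
    have hfmem : ∀ n, fb S ≤ n → n ∈ S := fb_mem hS.2.2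
    have hmS := mult_mem hS
    have hmS0 : mult S ≠ 0 := hmS.2
    by_cases hord : fb S ≤ mult S
    · -- ordinary case: take Δ = ℕ
      refine ⟨hS, Set.univ, univ_mem_Jiter k, diff_nonempty hS, fun _ _ => trivial,
        fun a ha b _ => ?_⟩
      have ham : mult S ≤ a := mult_le ha.1 ha.2
      refine ⟨hfmem _ (by omega), ?_⟩
      have : a ≠ 0 := ha.2
      simp only [Set.mem_singleton_iff]; omega
    · push_neg at hord
      have hk1 : 1 ≤ k := by
        by_contra hk
        have hk0 : k = 0 := by omega
        rw [hk0] at hfb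
        omega
      set Δ : Set ℕ := S ∪ {x | fb S ≤ x + mult S} with hΔdef
      have hΔsgp : IsNumSgp Δ := by
        refine ⟨Or.inl hS.1, ?_, ?_⟩
        · rintro a (ha | ha) b (hb | hb)
          · exact Or.inl (hS.2.1 a ha b hb)
          · exact Or.inr (by simp only [Set.mem_setOf_eq] at hb ⊢; omega)
          · exact Or.inr (by simp only [Set.mem_setOf_eq] at ha ⊢; omega)
          · exact Or.inr (by simp only [Set.mem_setOf_eq] at ha ⊢; omega)
        · exact hS.2.2.subset (Set.compl_subset_compl.2 Set.subset_union_left)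
      have hideal : IsIdealOf (S \ {0}) Δ := by
        refine ⟨diff_nonempty hS, fun x hx => Or.inl hx.1, fun a ha b hb => ?_⟩
        have ham : mult S ≤ a := mult_le ha.1 ha.2
        have ha0 : a ≠ 0 := ha.2
        rcases hb with hb | hb
        · exact ⟨hS.2.1 a ha.1 b hb, by simp only [Set.mem_singleton_iff]; omega⟩
        · simp only [Set.mem_setOf_eq] at hb
          exact ⟨hfmem _ (by omega), by simp only [Set.mem_singleton_iff]; omega⟩
      have hfbΔ : fb Δ ≤ fb S - mult S := by
        apply Nat.sInf_le
        intro n hn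
        exact Or.inr (by simp only [Set.mem_setOf_eq]; omega)
      have hmultΔ : min (mult S) (fb S - mult S) ≤ mult Δ := by
        have hne : (Δ \ {0}).Nonempty := ⟨mult S, Or.inl hmS.1, hmS.2⟩
        refine le_csInf hne ?_
        rintro b ⟨(hb | hb), hb0⟩
        · have : mult S ≤ b := mult_le hb hb0
          omega
        · simp only [Set.mem_setOf_eq] at hb
          omega
      have hkey : fb S - mult S ≤ k * min (mult S) (fb S - mult S) := by
        rcases le_total (mult S) (fb S - mult S) with h | h
        · rw [min_eq_left h]
          have : (k + 1) * mult S = k * mult S + mult S := by ring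
          omega
        · rw [min_eq_right h]
          calc fb S - mult S = 1 * (fb S - mult S) := (one_mul _).symm
            _ ≤ k * (fb S - mult S) := Nat.mul_le_mul_right _ hk1
      have hfinal : fb Δ ≤ k * mult Δ :=
        le_trans hfbΔ (le_trans hkey (Nat.mul_le_mul_left k hmultΔ))
      exact ⟨hS, Δ, ih Δ hΔsgp hfinal, hideal⟩

lemma Jiter_set_eq {S : Set ℕ} (hS : IsNumSgp S) :
    {k | S ∈ Jiter k} = {k | fb S ≤ k * mult S} :=
  Set.ext fun k => ⟨fun h => fb_le_of_mem_Jiter k S h, fun h => mem_Jiter_of_fb_le k S hS h⟩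



/-- The shift map: `S ↦ {0} ∪ (m + S)`. -/
def shft (m : ℕ) (S : Set ℕ) : Set ℕ := insert 0 ((fun n => m + n) '' S)

lemma mem_shft {m : ℕ} {S : Set ℕ} {x : ℕ} :
    x ∈ shft m S ↔ x = 0 ∨ ∃ s ∈ S, m + s = x := by
  simp [shft]

section Shift

variable {m : ℕ} {S : Set ℕ} (hS : IsNumSgp S) (hm : mult S = m) (hm2 : 2 ≤ m)

include hS hm hm2

lemma one_le_fb : 1 ≤ fb S := by
  by_contra h
  have h1 : (1 : ℕ) ∈ S := fb_mem hS.2.2 1 (by omega)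
  have := mult_le h1 one_ne_zero
  omega

lemma shft_isNumSgp : IsNumSgp (shft m S) := by
  have hmem : m ∈ S := by rw [← hm]; exact (mult_mem hS).1
  refine ⟨Or.inl rfl, ?_, ?_⟩
  · intro a ha b hb
    rcases mem_shft.1 ha with rfl | ⟨s, hs, rfl⟩
    · simpa using hb
    · rcases mem_shft.1 hb with rfl | ⟨t, ht, rfl⟩
      · exact mem_shft.2 (Or.inr ⟨s, hs, rfl⟩)
      · refine mem_shft.2 (Or.inr ⟨s + (m + t), hS.2.1 s hs (m + t) (hS.2.1 m hmem t ht), by ring⟩)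
  · refine Set.Finite.subset (Set.finite_Iio (m + fb S)) ?_
    intro n hn
    simp only [Set.mem_compl_iff] at hn
    simp only [Set.mem_Iio]
    by_contra hlt
    push_neg at hlt
    exact hn (mem_shft.2 (Or.inr ⟨n - m, fb_mem hS.2.2 _ (by omega), by omega⟩))

lemma shft_diff : shft m S \ {0} = (fun n => m + n) '' S := by
  ext x
  simp only [Set.mem_diff, Set.mem_singleton_iff, mem_shft, Set.mem_image]
  constructor
  · rintro ⟨(rfl | ⟨s, hs, rfl⟩), hx0⟩
    · omega
    · exact ⟨s, hs, rfl⟩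
  · rintro ⟨s, hs, rfl⟩
    exact ⟨Or.inr ⟨s, hs, rfl⟩, by omega⟩

lemma mult_shft : mult (shft m S) = m := by
  have h0 : (0 : ℕ) ∈ S := hS.1
  rw [mult, shft_diff hS hm hm2]
  refine le_antisymm (Nat.sInf_le ⟨0, h0, by ring⟩) (le_csInf ⟨m, 0, h0, by ring⟩ ?_)
  rintro b ⟨s, _, rfl⟩
  exact Nat.le_add_right m s

lemma fb_shft : fb (shft m S) = fb S + m := by
  refine le_antisymm (Nat.sInf_le ?_) ?_
  · intro n hn
    exact mem_shft.2 (Or.inr ⟨n - m, fb_mem hS.2.2 _ (by omega), by omega⟩)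
  · have hf1 := one_le_fb hS hm hm2
    have hnotin : fb S - 1 ∉ S := by
      have hlt : fb S - 1 < sInf (fbset S) := by
        have : fb S - 1 < fb S := by omega
        exact this
      have hnm : fb S - 1 ∉ fbset S := Nat.notMem_of_lt_sInf hlt
      simp only [fbset, Set.mem_setOf_eq, not_forall] at hnm
      obtain ⟨n, hn1, hn2⟩ := hnm
      have : n = fb S - 1 := by
        by_contra hne
        exact hn2 (fb_mem hS.2.2 n (by omega))
      rwa [this] at hn2
    refine le_csInf (fbset_nonempty (shft_isNumSgp hS hm hm2).2.2) ?_
    intro N hN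
    by_contra hlt
    push_neg at hlt
    have hmem : m + (fb S - 1) ∈ shft m S := hN _ (by omega)
    rcases mem_shft.1 hmem with h0 | ⟨s, hs, hseq⟩
    · omega
    · have : s = fb S - 1 := by omega
      rw [this] at hs
      exact hnotin hs

end Shift

end Stmt19Aux

open Stmt19Aux

/-- there are at least as many numerical semigroups with
multiplicity `m` and complexity `c + 1` as with multiplicity `m` and complexity `c`. -/
theorem stmt19 (c m : ℕ) (hm : 2 ≤ m) :
    {S : Set ℕ | IsNumSgp S ∧ mult S = m ∧ complexity S = c}.ncard ≤
      {S : Set ℕ | IsNumSgp S ∧ mult S = m ∧ complexity S = c + 1}.ncard := by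
  set A := {S : Set ℕ | IsNumSgp S ∧ mult S = m ∧ complexity S = c} with hA
  set B := {S : Set ℕ | IsNumSgp S ∧ mult S = m ∧ complexity S = c + 1} with hB
  -- B is finite
  have hBsub : ∀ S ∈ B, ∀ n, (c + 1) * m ≤ n → n ∈ S := by
    rintro S ⟨hS, hmS, hcS⟩ n hn
    have hmpos : 1 ≤ mult S := by omega
    have hne : {k | S ∈ Jiter k}.Nonempty := by
      refine ⟨fb S, mem_Jiter_of_fb_le _ S hS ?_⟩
      calc fb S = fb S * 1 := (mul_one _).symm
        _ ≤ fb S * mult S := Nat.mul_le_mul_left _ hmpos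
    have hmemJ : S ∈ Jiter (complexity S) := Nat.sInf_mem hne
    rw [hcS] at hmemJ
    have := fb_le_of_mem_Jiter (c + 1) S hmemJ
    rw [hmS] at this
    exact fb_mem hS.2.2 n (by omega)
  have hBfin : B.Finite := by
    set N := (c + 1) * m with hN
    have himfin : ((fun S => S ∩ Set.Iio N) '' B).Finite :=
      Set.Finite.subset (Set.Finite.finite_subsets (Set.finite_Iio N))
        (by rintro _ ⟨S, _, rfl⟩; exact Set.inter_subset_right)
    refine Set.Finite.of_finite_image himfin ?_
    intro S₁ hS₁ S₂ hS₂ heq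
    have heq' : S₁ ∩ Set.Iio N = S₂ ∩ Set.Iio N := heq
    ext n
    by_cases hn : n < N
    · constructor
      · intro h
        have : n ∈ S₂ ∩ Set.Iio N := heq' ▸ (⟨h, hn⟩ : n ∈ S₁ ∩ Set.Iio N)
        exact this.1
      · intro h
        have : n ∈ S₁ ∩ Set.Iio N := heq'.symm ▸ (⟨h, hn⟩ : n ∈ S₂ ∩ Set.Iio N)
        exact this.1
    · exact ⟨fun _ => hBsub S₂ hS₂ n (by omega), fun _ => hBsub S₁ hS₁ n (by omega)⟩
  -- the injection
  refine Set.ncard_le_ncard_of_injOn (fun S => shft m S) ?_ ?_ hBfin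
  · rintro S ⟨hS, hmS, hcS⟩
    have hTsgp := shft_isNumSgp hS hmS hm
    have hTm := mult_shft hS hmS hm
    have hTfb := fb_shft hS hmS hm
    refine ⟨hTsgp, hTm, ?_⟩
    -- complexity computation
    have hJS : {k | S ∈ Jiter k} = {k | fb S ≤ k * m} := by
      rw [Jiter_set_eq hS, hmS]
    have hJT : {k | shft m S ∈ Jiter k} = {k | fb S + m ≤ k * m} := by
      rw [Jiter_set_eq hTsgp, hTm, hTfb]
    have hcS' : sInf {k | fb S ≤ k * m} = c := by
      rw [← hJS]; exact hcS
    have hSne : {k | fb S ≤ k * m}.Nonempty := by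
      refine ⟨fb S, ?_⟩
      simp only [Set.mem_setOf_eq]
      calc fb S = fb S * 1 := (mul_one _).symm
        _ ≤ fb S * m := Nat.mul_le_mul_left _ (by omega)
    have hcmem : fb S ≤ c * m := by
      have := Nat.sInf_mem hSne
      rwa [hcS'] at this
    have hup : fb S + m ≤ (c + 1) * m := by
      have h1 : (c + 1) * m = c * m + m := by ring
      omega
    rw [complexity, hJT]
    have hTne : {k | fb S + m ≤ k * m}.Nonempty := ⟨c + 1, hup⟩
    refine le_antisymm (Nat.sInf_le hup) ?_
    have hi := Nat.sInf_mem hTne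
    set i := sInf {k | fb S + m ≤ k * m} with hidef
    simp only [Set.mem_setOf_eq] at hi
    have hi1 : 1 ≤ i := by
      by_contra h
      have : i = 0 := by omega
      rw [this] at hi
      omega
    have hj : fb S ≤ (i - 1) * m := by
      have h1 : i * m = (i - 1) * m + m := by
        have : i = (i - 1) + 1 := by omega
        nth_rewrite 1 [this]
        ring
      omega
    have : c ≤ i - 1 := by
      rw [← hcS']
      exact Nat.sInf_le hj
    omega
  · rintro S₁ ⟨hS₁, hmS₁, _⟩ S₂ ⟨hS₂, hmS₂, _⟩ heq
    ext x
    have key : ∀ T : Set ℕ, m + x ∈ shft m T ↔ x ∈ T := by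
      intro T
      rw [mem_shft]
      constructor
      · rintro (h0 | ⟨s, hs, hseq⟩)
        · omega
        · have : s = x := by omega
          rwa [this] at hs
      · intro h
        exact Or.inr ⟨x, h, rfl⟩
    rw [← key S₁, ← key S₂]
    simp only at heq
    rw [heq]
end
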